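/- Let V_n denote the monic Chebyshev polynomials of the second kind and T_n those of the first kind. Then the span of {V_{6k} : k ≥ 0} ∪ {V_{6k+4} : k ≥ 0} equals ℝ·1 ⊕ T_3 · E, where E = span{V_{6k+1}, V_{6k+3} : k ≥ 0}. -/

import Mathlib

/-- Monic Chebyshev polynomial of the first kind: `Tp n` evaluated at `2 cos θ` is `2 cos (n θ)`. -/
noncomputable def Tp (n : ℤ) : Polynomial ℝ :=
  Polynomial.C 2 * (Polynomial.Chebyshev.T ℝ n).comp (Polynomial.C (1 / 2) * Polynomial.X)

/-- Monic Chebyshev polynomial of the second kind: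
`Vp n` evaluated at `2 cos θ` is `sin ((n+1) θ) / sin θ`. -/
noncomputable def Vp (n : ℤ) : Polynomial ℝ :=
  (Polynomial.Chebyshev.U ℝ n).comp (Polynomial.C (1 / 2) * Polynomial.X)

/-- `E = span{V_{6k+1}, V_{6k+3} : k ≥ 0}`. -/
noncomputable def E : Submodule ℝ (Polynomial ℝ) :=
  Submodule.span ℝ
    ({p : Polynomial ℝ | ∃ k : ℕ, p = Vp (6 * k + 1)} ∪
      {p : Polynomial ℝ | ∃ k : ℕ, p = Vp (6 * k + 3)})

/-! `Tp` and `Vp` are Mathlib's Vieta–Lucas and Vieta–Fibonacci polynomials `C ℝ n` and `S ℝ n`, for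
which the product formula `C m * S n = S (n + m) + S (n - m)` holds. With `m = 3` it gives
`V_{6k+6} = T_3 V_{6k+3} - V_{6k}` and `V_{6k+4} = T_3 V_{6k+1} - V_{6k-2}`, so starting from
`V_0 = 1` and `V_{-2} = -1` induction on `k` puts every `V_{6k}`, `V_{6k+4}` in `ℝ·1 + T_3·E`, and
read backwards the same identities put `T_3 V_{6k+1}` and `T_3 V_{6k+3}` in the span of the
`V_{6k}`, `V_{6k+4}`. The sum is direct
because every multiple of `T_3` vanishes at `0`, while `1` does not. -/

open Polynomial Polynomial.Chebyshev

theorem Polynomial.Chebyshev.C_mul_S (R : Type*) [CommRing R] (m n : ℤ) :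
    C R m * S R n = S R (n + m) + S R (n - m) := by
  induction m using Polynomial.Chebyshev.induct with
  | zero => simp [two_mul]
  | one => rw [C_one]; linear_combination -(S_sub_one R n)
  | add_two m ih1 ih2 =>
    have h₁ := S_add_one R (n + (m + 1))
    have h₂ := S_sub_one R (n - (m + 1))
    have h₃ := C_add_two R m
    linear_combination (norm := ring_nf) S R n * h₃ - h₂ - h₁ - ih2 + (X : R[X]) * ih1
  | neg_add_one m ih1 ih2 =>
    have h₁ := S_add_one R (n + (-m - 1 + 1))
    have h₂ := S_sub_one R (n - (-m - 1 + 1))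
    have h₃ := C_add_two R (-m - 1)
    linear_combination (norm := ring_nf) S R n * h₃ - h₂ - h₁ - ih2 + (X : R[X]) * ih1

theorem Tp_eq_C (n : ℤ) : Tp n = C ℝ n := by
  rw [Tp, C_eq_two_mul_T_comp_half_mul_X ℝ n, invOf_eq_inv, map_ofNat, one_div]

theorem Vp_eq_S (n : ℤ) : Vp n = S ℝ n := by
  rw [Vp, S_eq_U_comp_half_mul_X ℝ n, invOf_eq_inv, one_div]

theorem Tp_mul_Vp (m n : ℤ) : Tp m * Vp n = Vp (n + m) + Vp (n - m) := by
  simp only [Tp_eq_C, Vp_eq_S, C_mul_S]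

theorem Vp_zero : Vp 0 = 1 := by
  rw [Vp_eq_S, S_zero]

theorem Vp_neg_two : Vp (-2) = -1 := by
  rw [Vp_eq_S, S_neg_two]

theorem Tp_three_eval_zero : (Tp 3).eval 0 = 0 := by
  rw [Tp_eq_C, show (3 : ℤ) = 1 + 2 by norm_num, C_add_two]
  simp

theorem Vp_six_mul_add_one_mem_E (k : ℕ) : Vp (6 * k + 1) ∈ E :=
  Submodule.subset_span (Or.inl ⟨k, rfl⟩)

theorem Vp_six_mul_add_three_mem_E (k : ℕ) : Vp (6 * k + 3) ∈ E :=
  Submodule.subset_span (Or.inr ⟨k, rfl⟩)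

theorem Vp_add_six_mul_mem {S : Submodule ℝ ℝ[X]} {a : ℤ} (h₀ : Vp a ∈ S)
    (hT : ∀ k : ℕ, Tp 3 * Vp (a + 6 * k + 3) ∈ S) (k : ℕ) : Vp (a + 6 * k) ∈ S := by
  induction k with
  | zero => simpa using h₀
  | succ k ih =>
    have hrec : Vp (a + 6 * (k + 1 : ℕ)) = Tp 3 * Vp (a + 6 * k + 3) - Vp (a + 6 * k) := by
      rw [Tp_mul_Vp]; push_cast; ring_nf
    rw [hrec]
    exact sub_mem (hT k) ih

theorem Vp_six_mul_mem_of_Tp_three_mul_mem {S : Submodule ℝ ℝ[X]} (h₁ : 1 ∈ S)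
    (hT : ∀ q ∈ E, Tp 3 * q ∈ S) (k : ℕ) : Vp (6 * k) ∈ S ∧ Vp (6 * k + 4) ∈ S := by
  constructor
  · simpa using Vp_add_six_mul_mem (a := 0) (by rwa [Vp_zero])
      (fun k => by simpa using hT _ (Vp_six_mul_add_three_mem_E k)) k
  · convert Vp_add_six_mul_mem (a := -2) (by simpa [Vp_neg_two] using neg_mem h₁)
      (fun k => by convert hT _ (Vp_six_mul_add_one_mem_E k) using 3; ring) (k + 1) using 2
    push_cast; ring

theorem Tp_three_mul_mem_of_Vp_six_mul_mem {S : Submodule ℝ ℝ[X]}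
    (hS : ∀ k : ℕ, Vp (6 * k) ∈ S ∧ Vp (6 * k + 4) ∈ S) {q : ℝ[X]} (hq : q ∈ E) :
    Tp 3 * q ∈ S := by
  suffices E ≤ S.comap (LinearMap.mulLeft ℝ (Tp 3)) from this hq
  rw [E, Submodule.span_le]
  rintro _ (⟨k, rfl⟩ | ⟨k, rfl⟩) <;>
    simp only [SetLike.mem_coe, Submodule.mem_comap, LinearMap.mulLeft_apply, Tp_mul_Vp]
  · have hlow : Vp (6 * k + 1 - 3) ∈ S := by
      rcases k with _ | k
      · simpa [Vp_neg_two, Vp_zero] using neg_mem (hS 0).1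
      · convert (hS k).2 using 2; push_cast; ring
    exact add_mem (by convert (hS k).2 using 2; ring) hlow
  · exact add_mem (by convert (hS (k + 1)).1 using 2; push_cast; ring) (by simpa using (hS k).1)

theorem span_Tp_three_mul_le_ker_eval_zero (s : Set ℝ[X]) :
    Submodule.span ℝ {p | ∃ q ∈ s, p = Tp 3 * q} ≤ LinearMap.ker (leval (0 : ℝ)) := by
  rw [Submodule.span_le]
  rintro _ ⟨q, -, rfl⟩
  simp [Tp_three_eval_zero]

theorem stmt_19 :
    Submodule.span ℝ
        ({p : Polynomial ℝ | ∃ k : ℕ, p = Vp (6 * k)} ∪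
          {p : Polynomial ℝ | ∃ k : ℕ, p = Vp (6 * k + 4)}) =
      Submodule.span ℝ {(1 : Polynomial ℝ)} ⊔
        Submodule.span ℝ {p : Polynomial ℝ | ∃ q ∈ E, p = Tp 3 * q} ∧
      Submodule.span ℝ {(1 : Polynomial ℝ)} ⊓
        Submodule.span ℝ {p : Polynomial ℝ | ∃ q ∈ E, p = Tp 3 * q} = ⊥ := by
  set L := Submodule.span ℝ
    ({p : Polynomial ℝ | ∃ k : ℕ, p = Vp (6 * k)} ∪
      {p : Polynomial ℝ | ∃ k : ℕ, p = Vp (6 * k + 4)})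
  set M := Submodule.span ℝ {p : Polynomial ℝ | ∃ q ∈ E, p = Tp 3 * q}
  have hL : ∀ k : ℕ, Vp (6 * k) ∈ L ∧ Vp (6 * k + 4) ∈ L := fun k =>
    ⟨Submodule.subset_span (Or.inl ⟨k, rfl⟩), Submodule.subset_span (Or.inr ⟨k, rfl⟩)⟩
  have h1M : (1 : ℝ[X]) ∉ M := fun h => by
    simpa using span_Tp_three_mul_le_ker_eval_zero E h
  refine ⟨le_antisymm ?_ (sup_le ?_ ?_), ?_⟩
  · have hgen := Vp_six_mul_mem_of_Tp_three_mul_mem (S := Submodule.span ℝ {1} ⊔ M)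
      (Submodule.mem_sup_left (Submodule.mem_span_singleton_self 1))
      (fun q hq => Submodule.mem_sup_right (Submodule.subset_span ⟨q, hq, rfl⟩))
    rw [Submodule.span_le]
    rintro _ (⟨k, rfl⟩ | ⟨k, rfl⟩)
    exacts [(hgen k).1, (hgen k).2]
  · simpa [Vp_zero] using (hL 0).1
  · rw [Submodule.span_le]
    rintro _ ⟨q, hq, rfl⟩
    exact Tp_three_mul_mem_of_Vp_six_mul_mem hL hq
  · exact disjoint_iff.1 ((Submodule.disjoint_span_singleton' one_ne_zero).2 h1M).symm
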